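/- Let Γ be a group with representation ρ: Γ → GL(𝔽^d), and (G=(V,E),ψ) a Γ-gain graph. With A_{e,ψ} ⊆ (𝔽^d)^V as the canonical subspaces (x(i)+ρ(ψ(e))x(j)=0 and supported on {i,j} for non-loops; x(i) ∈ image(I_d−ρ(ψ(e))) supported on {i} for loops), one has dim_𝔽 span{A_{e,ψ} : e ∈ E} = d·|V(E)| − d·c(E) + Σ_{X ∈ C(E)} d_ρ(⟨X⟩), where d_ρ(⟨X⟩) = dim_𝔽 span{image(I_d − ρ(γ)) : γ ∈ ⟨X⟩_{ψ,v}} for a base vertex v in the component X. -/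

import Mathlib

/-!
Let `S` be the span of the `A_{e,ψ}`. In each component `X` of `E` fix a base vertex `v_X` and,
for every vertex `u` of `X`, the gain `g_u` of some walk from `v_X` to `u`. Each `A_{e,ψ}` is the
range of `y ↦ y·[tgt e] - (ρ(ψ e) y)·[src e]`, so telescoping along walks gives
`y·[u] ≡ (ρ(g_u) y)·[v_X]` modulo `S`, and closed walks at `v_X` show that vectors placed at `v_X`
are only determined modulo `D_X = span{image(I - ρ(γ)) : γ ∈ ⟨X⟩}`. Hence
`x ↦ (x|_{V ∖ V(E)}, (∑_{u ∈ X} ρ(g_u) x(u) mod D_X)_X)` maps `(𝔽^d)^V` onto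
`(𝔽^d)^{V ∖ V(E)} × ∏_X 𝔽^d ⧸ D_X` with kernel exactly `S`, and rank–nullity gives
`dim S = d|V(E)| - ∑_X (d - d_ρ(⟨X⟩))`.
-/

/-- A directed multigraph: edges with a source and target map. -/
structure GG (V E : Type*) where
  src : E → V
  tgt : E → V

namespace GG

variable {V E : Type*}

/-- The initial vertex of a step (an edge together with a direction). -/
def stepHead (G : GG V E) (s : E × Bool) : V := if s.2 then G.src s.1 else G.tgt s.1

/-- The final vertex of a step. -/
def stepLast (G : GG V E) (s : E × Bool) : V := if s.2 then G.tgt s.1 else G.src s.1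

/-- Walks from `u` to `w` using only edges of `X`. -/
inductive IsWalkFrom (G : GG V E) (X : Set E) : V → V → List (E × Bool) → Prop
  | nil (v : V) : IsWalkFrom G X v v []
  | cons {u w : V} {s : E × Bool} {l : List (E × Bool)} (he : s.1 ∈ X)
      (h1 : G.stepHead s = u) (hl : IsWalkFrom G X (G.stepLast s) w l) :
      IsWalkFrom G X u w (s :: l)

variable {Γ : Type*} [Group Γ]

/-- The gain of a walk: the product of the edge gains, inverted on backward edges. -/
def gainOf (ψ : E → Γ) : List (E × Bool) → Γ
  | [] => 1
  | s :: l => (if s.2 then ψ s.1 else (ψ s.1)⁻¹) * gainOf ψ l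

/-- `⟨X⟩_{ψ,v}`: the subgroup generated by gains of closed walks at `v` using edges of `X`. -/
def walkGroup (G : GG V E) (ψ : E → Γ) (X : Set E) (v : V) : Subgroup Γ :=
  Subgroup.closure {g : Γ | ∃ l, G.IsWalkFrom X v v l ∧ gainOf ψ l = g}

open Classical in
/-- The switching of the gain function `ψ` at vertex `v` with `γ`. -/
noncomputable def switch (G : GG V E) (ψ : E → Γ) (v : V) (γ : Γ) : E → Γ :=
  fun e => (if G.src e = v then γ else 1) * ψ e * (if G.tgt e = v then γ⁻¹ else 1)

/-- Two gain functions are equivalent if one is obtained from the other by a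
finite sequence of switchings. -/
def Equivalent (G : GG V E) (ψ ψ' : E → Γ) : Prop :=
  Relation.ReflTransGen (fun a b => ∃ v γ, b = G.switch a v γ) ψ ψ'

end GG

open GG

variable {𝔽 : Type*} [Field 𝔽] {d : ℕ}

open Classical in
/-- The canonical subspace `A_{e,ψ}` of `(𝔽^d)^V` associated with an edge `e`:
for a non-loop `e=(i,j)` it is `{x : x(i) + ρ(ψ(e))x(j) = 0, x = 0 off {i,j}}`, and for
a loop at `i` it is `{x : x(i) ∈ image(I − ρ(ψ(e))), x = 0 off {i}}`. -/
noncomputable def Asub {V E Γ : Type*} [Group Γ] (G : GG V E)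
    (ρ : Γ →* ((Fin d → 𝔽) ≃ₗ[𝔽] (Fin d → 𝔽))) (ψ : E → Γ) (e : E) :
    Submodule 𝔽 (V → Fin d → 𝔽) :=
  if G.src e = G.tgt e then
    (Submodule.comap (LinearMap.proj (R := 𝔽) (φ := fun _ : V => Fin d → 𝔽) (G.src e))
        (LinearMap.range (LinearMap.id - (ρ (ψ e)).toLinearMap))) ⊓
      ⨅ v ∈ {v : V | v ≠ G.src e},
        LinearMap.ker (LinearMap.proj (R := 𝔽) (φ := fun _ : V => Fin d → 𝔽) v)
  else
    LinearMap.ker (LinearMap.proj (R := 𝔽) (φ := fun _ : V => Fin d → 𝔽) (G.src e) +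
        (ρ (ψ e)).toLinearMap ∘ₗ LinearMap.proj (G.tgt e)) ⊓
      ⨅ v ∈ {v : V | v ≠ G.src e ∧ v ≠ G.tgt e},
        LinearMap.ker (LinearMap.proj (R := 𝔽) (φ := fun _ : V => Fin d → 𝔽) v)

/-- `d_ρ(X) = dim_𝔽 span{ image(I − ρ(γ)) : γ ∈ X }`. -/
noncomputable def dRho {Γ : Type*} [Group Γ]
    (ρ : Γ →* ((Fin d → 𝔽) ≃ₗ[𝔽] (Fin d → 𝔽))) (X : Set Γ) : ℕ :=
  Module.finrank 𝔽
    ↥(⨆ γ ∈ X, LinearMap.range (LinearMap.id - (ρ γ).toLinearMap))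

variable {V E Γ : Type*} [Group Γ] [Fintype V] [Fintype E] [DecidableEq V] [DecidableEq E]

/-- The finset of endvertices of the edges of `F`. -/
def vertexFinset (G : GG V E) (F : Finset E) : Finset V :=
  F.image G.src ∪ F.image G.tgt

/-- Two edges of `F` lie in the same connected component of `F`. -/
def edgeCompRel (G : GG V E) (F : Finset E) (e f : {x // x ∈ F}) : Prop :=
  ∃ l, G.IsWalkFrom ↑F (G.src e.1) (G.src f.1) l

/-- `c(F)`: the number of connected components of the edge set `F`. -/
noncomputable def edgeNumComp (G : GG V E) (F : Finset E) : ℕ :=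
  Nat.card (Quot (edgeCompRel G F))

/-- The connected component of `F` containing the edge `e`. -/
def edgeCompCl (G : GG V E) (F : Finset E) (e : E) : Set E :=
  {f | f ∈ F ∧ ∃ l, G.IsWalkFrom ↑F (G.src e) (G.src f) l}

section InvariantSubgroup

variable {R W M Γ : Type*} [Semiring R] [AddCommGroup W] [Module R W] [AddCommGroup M]
  [Module R M] [Group Γ]

lemma iSup_range_id_sub_closure_le_ker (ρ : Γ →* (W ≃ₗ[R] W)) {S : Set Γ} {F : W →ₗ[R] M}
    (hS : ∀ γ ∈ S, ∀ w, F (ρ γ w) = F w) :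
    ⨆ γ ∈ (Subgroup.closure S : Set Γ), LinearMap.range (LinearMap.id - (ρ γ).toLinearMap) ≤
      LinearMap.ker F := by
  refine iSup₂_le fun γ hγ => ?_
  have hinv : ∀ w, F (ρ γ w) = F w := by
    induction hγ using Subgroup.closure_induction with
    | mem γ hγ => exact hS γ hγ
    | one => intro w; rw [map_one]; rfl
    | mul a b _ _ ha hb => intro w; simp [ha, hb]
    | inv a _ ha =>
      intro w
      rw [← ha ((ρ a⁻¹) w), ← LinearEquiv.mul_apply, ← map_mul, mul_inv_cancel, map_one]
      rfl
  rintro _ ⟨w, rfl⟩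
  simp [hinv]

end InvariantSubgroup

namespace GG

section Walks

variable {V E : Type*} {G : GG V E} {X : Set E}

def flipStep (s : E × Bool) : E × Bool := (s.1, !s.2)

@[simp]
lemma stepHead_flipStep (G : GG V E) (s : E × Bool) : G.stepHead (flipStep s) = G.stepLast s := by
  cases s with
  | mk e b => cases b <;> rfl

@[simp]
lemma stepLast_flipStep (G : GG V E) (s : E × Bool) : G.stepLast (flipStep s) = G.stepHead s := by
  cases s with
  | mk e b => cases b <;> rfl

lemma IsWalkFrom.append {u v w : V} {l l' : List (E × Bool)} (h : G.IsWalkFrom X u v l)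
    (h' : G.IsWalkFrom X v w l') : G.IsWalkFrom X u w (l ++ l') := by
  induction h with
  | nil => exact h'
  | cons hs hhead _ ih => exact .cons hs hhead (ih h')

lemma IsWalkFrom.singleton {s : E × Bool} (hs : s.1 ∈ X) :
    G.IsWalkFrom X (G.stepHead s) (G.stepLast s) [s] :=
  .cons hs rfl (.nil _)

lemma IsWalkFrom.reverse {u v : V} {l : List (E × Bool)} (h : G.IsWalkFrom X u v l) :
    G.IsWalkFrom X v u (l.reverse.map flipStep) := by
  induction h with
  | nil v => exact .nil v
  | @cons u w s l hs hhead _ ih =>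
    have hback : G.IsWalkFrom X (G.stepLast s) u [flipStep s] := by
      simpa [hhead] using IsWalkFrom.singleton (G := G) (s := flipStep s) hs
    simpa using ih.append hback

variable {Γ : Type*} [Group Γ]

def stepGain (ψ : E → Γ) (s : E × Bool) : Γ := if s.2 then ψ s.1 else (ψ s.1)⁻¹

lemma gainOf_cons (ψ : E → Γ) (s : E × Bool) (l : List (E × Bool)) :
    gainOf ψ (s :: l) = stepGain ψ s * gainOf ψ l := rfl

lemma gainOf_append (ψ : E → Γ) (l l' : List (E × Bool)) :
    gainOf ψ (l ++ l') = gainOf ψ l * gainOf ψ l' := by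
  induction l with
  | nil => simp [gainOf]
  | cons s l ih => simp [gainOf, ih, mul_assoc]

lemma gainOf_reverse (ψ : E → Γ) (l : List (E × Bool)) :
    gainOf ψ (l.reverse.map flipStep) = (gainOf ψ l)⁻¹ := by
  induction l with
  | nil => simp [gainOf]
  | cons s l ih =>
    simp only [List.reverse_cons, List.map_append, gainOf_append, ih]
    obtain ⟨e, b⟩ := s
    cases b <;> simp [gainOf, flipStep]

end Walks

section Components

variable {V E : Type*} [Fintype E] {G : GG V E}

def Reach (G : GG V E) (u v : V) : Prop := ∃ l, G.IsWalkFrom ↑(Finset.univ : Finset E) u v l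

lemma Reach.refl (u : V) : G.Reach u u := ⟨[], .nil u⟩

lemma Reach.symm {u v : V} (h : G.Reach u v) : G.Reach v u :=
  let ⟨_, hl⟩ := h; ⟨_, hl.reverse⟩

lemma Reach.trans {u v w : V} (h : G.Reach u v) (h' : G.Reach v w) : G.Reach u w :=
  let ⟨_, hl⟩ := h; let ⟨_, hl'⟩ := h'; ⟨_, hl.append hl'⟩

lemma reach_stepHead_stepLast (s : E × Bool) : G.Reach (G.stepHead s) (G.stepLast s) :=
  ⟨_, .singleton (by simp)⟩

lemma reach_src_tgt (e : E) : G.Reach (G.src e) (G.tgt e) :=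
  reach_stepHead_stepLast (e, true)

lemma edgeCompRel_univ_equivalence : Equivalence (edgeCompRel G Finset.univ) where
  refl e := Reach.refl (G.src e.1)
  symm := Reach.symm
  trans := Reach.trans

lemma quot_mk_eq_iff {e f : {x // x ∈ (Finset.univ : Finset E)}} :
    Quot.mk (edgeCompRel G Finset.univ) e = Quot.mk _ f ↔ G.Reach (G.src e.1) (G.src f.1) := by
  rw [Quot.eq, edgeCompRel_univ_equivalence.eqvGen_iff]
  rfl

lemma IsWalkFrom.toEdgeCompCl {e₀ : E} {u w : V} {l : List (E × Bool)}
    (h : G.IsWalkFrom ↑(Finset.univ : Finset E) u w l) (hu : G.Reach (G.src e₀) u) :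
    G.IsWalkFrom (edgeCompCl G Finset.univ e₀) u w l := by
  induction h with
  | nil v => exact .nil v
  | @cons u w s l _ hhead _ ih =>
    have hlast : G.Reach (G.src e₀) (G.stepLast s) :=
      hu.trans (hhead ▸ reach_stepHead_stepLast s)
    have hsrc : G.Reach (G.src e₀) (G.src s.1) := by
      obtain ⟨e, b⟩ := s
      cases b
      · exact hlast
      · rwa [← hhead] at hu
    exact .cons ⟨Finset.mem_univ _, hsrc⟩ hhead (ih hlast)

variable (G)

noncomputable instance : Fintype (Quot (edgeCompRel G Finset.univ)) := Fintype.ofFinite _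

noncomputable def compBase (q : Quot (edgeCompRel G Finset.univ)) : V := G.src q.out.1

def InComp (q : Quot (edgeCompRel G Finset.univ)) (u : V) : Prop := G.Reach (G.compBase q) u

variable {G}

lemma inComp_compBase (q : Quot (edgeCompRel G Finset.univ)) : G.InComp q (G.compBase q) :=
  Reach.refl _

lemma InComp.unique {q q' : Quot (edgeCompRel G Finset.univ)} {u : V} (h : G.InComp q u)
    (h' : G.InComp q' u) : q = q' := by
  rw [← q.out_eq, ← q'.out_eq, quot_mk_eq_iff]
  exact h.trans h'.symm

lemma inComp_tgt_iff {q : Quot (edgeCompRel G Finset.univ)} {e : E} :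
    G.InComp q (G.tgt e) ↔ G.InComp q (G.src e) :=
  ⟨fun h => h.trans (reach_src_tgt e).symm, fun h => h.trans (reach_src_tgt e)⟩

lemma inComp_compBase_iff {q q' : Quot (edgeCompRel G Finset.univ)} :
    G.InComp q (G.compBase q') ↔ q' = q :=
  ⟨fun h => (inComp_compBase q').unique h, fun h => h ▸ inComp_compBase q'⟩

variable [DecidableEq V]

lemma stepLast_mem_vertexFinset (s : E × Bool) : G.stepLast s ∈ vertexFinset G Finset.univ := by
  obtain ⟨e, b⟩ := s
  cases b <;> simp [stepLast, vertexFinset]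

lemma Reach.mem_vertexFinset {u v : V} (h : G.Reach u v) (hu : u ∈ vertexFinset G Finset.univ) :
    v ∈ vertexFinset G Finset.univ := by
  obtain ⟨l, hl⟩ := h
  induction hl with
  | nil => exact hu
  | cons _ _ _ ih => exact ih (stepLast_mem_vertexFinset _)

lemma InComp.mem_vertexFinset {q : Quot (edgeCompRel G Finset.univ)} {u : V} (h : G.InComp q u) :
    u ∈ vertexFinset G Finset.univ :=
  Reach.mem_vertexFinset h (by simp [compBase, vertexFinset])

lemma exists_inComp_of_mem_vertexFinset {u : V} (hu : u ∈ vertexFinset G Finset.univ) :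
    ∃ q, G.InComp q u := by
  have hsrc (e : E) : G.InComp (Quot.mk _ ⟨e, Finset.mem_univ e⟩) (G.src e) :=
    quot_mk_eq_iff.1 (Quot.out_eq _)
  simp only [vertexFinset, Finset.mem_union, Finset.mem_image, Finset.mem_univ, true_and] at hu
  rcases hu with ⟨e, rfl⟩ | ⟨e, rfl⟩
  · exact ⟨_, hsrc e⟩
  · exact ⟨_, inComp_tgt_iff.2 (hsrc e)⟩

end Components

section CompGroup

variable {V E Γ : Type*} [Fintype E] [Group Γ] (G : GG V E) (ψ : E → Γ)

noncomputable def compGroup (q : Quot (edgeCompRel G Finset.univ)) : Subgroup Γ :=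
  G.walkGroup ψ (edgeCompCl G Finset.univ q.out.1) (G.compBase q)

open Classical in
noncomputable def pathGain (q : Quot (edgeCompRel G Finset.univ)) (u : V) : Γ :=
  if h : G.InComp q u then gainOf ψ h.choose else 1

variable {G ψ}

lemma exists_walk_gainOf_eq_pathGain {q : Quot (edgeCompRel G Finset.univ)} {u : V}
    (h : G.InComp q u) :
    ∃ l, G.IsWalkFrom ↑(Finset.univ : Finset E) (G.compBase q) u l ∧
      gainOf ψ l = G.pathGain ψ q u :=
  ⟨h.choose, h.choose_spec, by rw [pathGain, dif_pos h]⟩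

lemma pathGain_mul_gainOf_mul_inv_mem_compGroup {q : Quot (edgeCompRel G Finset.univ)}
    {u₁ u₂ : V} (h₁ : G.InComp q u₁) (h₂ : G.InComp q u₂) {l : List (E × Bool)}
    (hl : G.IsWalkFrom ↑(Finset.univ : Finset E) u₁ u₂ l) :
    G.pathGain ψ q u₁ * gainOf ψ l * (G.pathGain ψ q u₂)⁻¹ ∈ G.compGroup ψ q := by
  obtain ⟨l₁, hl₁, hg₁⟩ := exists_walk_gainOf_eq_pathGain (ψ := ψ) h₁
  obtain ⟨l₂, hl₂, hg₂⟩ := exists_walk_gainOf_eq_pathGain (ψ := ψ) h₂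
  refine Subgroup.subset_closure
    ⟨_, (hl₁.append (hl.append hl₂.reverse)).toEdgeCompCl (Reach.refl _), ?_⟩
  rw [gainOf_append, gainOf_append, gainOf_reverse, hg₁, hg₂, mul_assoc]

lemma pathGain_mul_mul_inv_mem_compGroup {q : Quot (edgeCompRel G Finset.univ)} {e : E}
    (h : G.InComp q (G.src e)) :
    G.pathGain ψ q (G.src e) * ψ e * (G.pathGain ψ q (G.tgt e))⁻¹ ∈ G.compGroup ψ q := by
  simpa [gainOf] using pathGain_mul_gainOf_mul_inv_mem_compGroup (ψ := ψ) h
    (inComp_tgt_iff.2 h) (.singleton (s := (e, true)) (by simp))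

end CompGroup

variable {𝔽 : Type*} [Field 𝔽] {d : ℕ} {V E Γ : Type*} [Group Γ]
  (G : GG V E) (ρ : Γ →* ((Fin d → 𝔽) ≃ₗ[𝔽] (Fin d → 𝔽))) (ψ : E → Γ)

section EdgeSpaces

variable [DecidableEq V]

/-- For a loop this is `y ↦ (y - ρ(ψ e) y)` placed at the vertex, so that `A_{e,ψ}` is its range
for loops and non-loops alike. -/
def edgeMap (e : E) : (Fin d → 𝔽) →ₗ[𝔽] (V → Fin d → 𝔽) :=
  LinearMap.single 𝔽 (fun _ => Fin d → 𝔽) (G.tgt e) -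
    LinearMap.single 𝔽 (fun _ => Fin d → 𝔽) (G.src e) ∘ₗ (ρ (ψ e)).toLinearMap

lemma edgeMap_apply (e : E) (y : Fin d → 𝔽) :
    G.edgeMap ρ ψ e y = Pi.single (G.tgt e) y - Pi.single (G.src e) (ρ (ψ e) y) := rfl

lemma Asub_eq_range_edgeMap (e : E) : Asub G ρ ψ e = LinearMap.range (G.edgeMap ρ ψ e) := by
  ext x
  rw [LinearMap.mem_range, Asub]
  split_ifs with hloop
  · simp only [Submodule.mem_inf, Submodule.mem_comap, Submodule.mem_iInf, LinearMap.mem_ker,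
      LinearMap.proj_apply, Set.mem_ofPred_eq, LinearMap.mem_range]
    constructor
    · rintro ⟨⟨y, hy⟩, hoff⟩
      refine ⟨y, funext fun v => ?_⟩
      by_cases hv : v = G.src e
      · subst hv
        simp [edgeMap_apply, ← hloop, ← hy]
      · simp [edgeMap_apply, ← hloop, Pi.single_eq_of_ne hv, hoff v hv]
    · rintro ⟨y, rfl⟩
      exact ⟨⟨y, by simp [edgeMap_apply, ← hloop]⟩,
        fun v hv => by simp [edgeMap_apply, ← hloop, Pi.single_eq_of_ne hv]⟩
  · simp only [Submodule.mem_inf, Submodule.mem_iInf, LinearMap.mem_ker, LinearMap.add_apply,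
      LinearMap.proj_apply, LinearMap.comp_apply, Set.mem_ofPred_eq, LinearEquiv.coe_coe,
      and_imp]
    constructor
    · rintro ⟨hsum, hoff⟩
      refine ⟨x (G.tgt e), funext fun v => ?_⟩
      by_cases hvt : v = G.tgt e
      · subst hvt
        simp [edgeMap_apply, Pi.single_eq_of_ne (Ne.symm hloop)]
      by_cases hvs : v = G.src e
      · subst hvs
        simp [edgeMap_apply, Pi.single_eq_of_ne hloop, eq_neg_of_add_eq_zero_left hsum]
      · simp [edgeMap_apply, Pi.single_eq_of_ne hvs, Pi.single_eq_of_ne hvt, hoff v hvs hvt]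
    · rintro ⟨y, rfl⟩
      refine ⟨?_, fun v hvs hvt => ?_⟩
      · simp [edgeMap_apply, Pi.single_eq_of_ne hloop, Pi.single_eq_of_ne (Ne.symm hloop)]
      · simp [edgeMap_apply, Pi.single_eq_of_ne hvs, Pi.single_eq_of_ne hvt]

lemma edgeMap_mem_iSup_Asub (e : E) (y : Fin d → 𝔽) :
    G.edgeMap ρ ψ e y ∈ ⨆ e, Asub G ρ ψ e :=
  Submodule.mem_iSup_of_mem e (Asub_eq_range_edgeMap G ρ ψ e ▸ LinearMap.mem_range_self _ y)

lemma single_sub_single_stepGain_mem_iSup_Asub (s : E × Bool) (y : Fin d → 𝔽) :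
    (Pi.single (G.stepLast s) y - Pi.single (G.stepHead s) (ρ (stepGain ψ s) y) :
      V → Fin d → 𝔽) ∈ ⨆ e, Asub G ρ ψ e := by
  obtain ⟨e, b⟩ := s
  cases b
  · convert neg_mem (G.edgeMap_mem_iSup_Asub ρ ψ e (ρ (ψ e)⁻¹ y)) using 1
    rw [edgeMap_apply, ← LinearEquiv.mul_apply, ← map_mul, mul_inv_cancel, map_one]
    simp [stepLast, stepHead, stepGain]
  · exact G.edgeMap_mem_iSup_Asub ρ ψ e y

lemma IsWalkFrom.single_sub_single_mem_iSup_Asub {X : Set E} {a b : V} {l : List (E × Bool)}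
    (h : G.IsWalkFrom X a b l) (y : Fin d → 𝔽) :
    (Pi.single b y - Pi.single a (ρ (gainOf ψ l) y) : V → Fin d → 𝔽) ∈ ⨆ e, Asub G ρ ψ e := by
  induction h generalizing y with
  | nil v => simp [gainOf]
  | @cons u w s l _ hhead _ ih =>
    subst hhead
    have hsplit : (Pi.single w y - Pi.single (G.stepHead s) (ρ (gainOf ψ (s :: l)) y) :
        V → Fin d → 𝔽) =
        (Pi.single w y - Pi.single (G.stepLast s) (ρ (gainOf ψ l) y)) +
          (Pi.single (G.stepLast s) (ρ (gainOf ψ l) y) -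
            Pi.single (G.stepHead s) (ρ (stepGain ψ s) (ρ (gainOf ψ l) y))) := by
      rw [gainOf_cons, map_mul, LinearEquiv.mul_apply]
      abel
    rw [hsplit]
    exact add_mem (ih y) (G.single_sub_single_stepGain_mem_iSup_Asub ρ ψ s _)

end EdgeSpaces

section Quotient

variable [Fintype E]

noncomputable def compSpan (q : Quot (edgeCompRel G Finset.univ)) : Submodule 𝔽 (Fin d → 𝔽) :=
  ⨆ γ ∈ (G.compGroup ψ q : Set Γ), LinearMap.range (LinearMap.id - (ρ γ).toLinearMap)

open Classical in
noncomputable def compCoeff (q : Quot (edgeCompRel G Finset.univ)) (u : V) :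
    (Fin d → 𝔽) →ₗ[𝔽] (Fin d → 𝔽) :=
  if G.InComp q u then (ρ (G.pathGain ψ q u)).toLinearMap else 0

variable {G ψ} in
lemma compCoeff_of_inComp {q : Quot (edgeCompRel G Finset.univ)} {u : V} (h : G.InComp q u) :
    G.compCoeff ρ ψ q u = (ρ (G.pathGain ψ q u)).toLinearMap := by
  rw [compCoeff, if_pos h]

variable {G ψ} in
lemma compCoeff_of_not_inComp {q : Quot (edgeCompRel G Finset.univ)} {u : V}
    (h : ¬ G.InComp q u) : G.compCoeff ρ ψ q u = 0 := by
  rw [compCoeff, if_neg h]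

variable [DecidableEq V]

lemma mkQ_single_eq_of_inComp {q : Quot (edgeCompRel G Finset.univ)} {u : V}
    (h : G.InComp q u) (y : Fin d → 𝔽) :
    (⨆ e, Asub G ρ ψ e).mkQ (Pi.single u y) =
      (⨆ e, Asub G ρ ψ e).mkQ (Pi.single (G.compBase q) (ρ (G.pathGain ψ q u) y)) := by
  obtain ⟨l, hl, hgain⟩ := exists_walk_gainOf_eq_pathGain (ψ := ψ) h
  rw [← hgain]
  exact (Submodule.Quotient.eq _).2 (hl.single_sub_single_mem_iSup_Asub G ρ ψ y)

lemma mkQ_single_compBase_eq_zero {q : Quot (edgeCompRel G Finset.univ)} {z : Fin d → 𝔽}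
    (hz : z ∈ G.compSpan ρ ψ q) :
    (⨆ e, Asub G ρ ψ e).mkQ (Pi.single (G.compBase q) z) = 0 := by
  refine iSup_range_id_sub_closure_le_ker ρ
    (F := (⨆ e, Asub G ρ ψ e).mkQ ∘ₗ LinearMap.single 𝔽 (fun _ : V => Fin d → 𝔽) (G.compBase q))
    ?_ hz
  rintro _ ⟨l, hl, rfl⟩ y
  exact ((Submodule.Quotient.eq _).2 (hl.single_sub_single_mem_iSup_Asub G ρ ψ y)).symm

lemma sum_mkQ_single_compCoeff {u : V} (hu : u ∈ vertexFinset G Finset.univ) (z : Fin d → 𝔽) :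
    ∑ q, (⨆ e, Asub G ρ ψ e).mkQ (Pi.single (G.compBase q) (G.compCoeff ρ ψ q u z)) =
      (⨆ e, Asub G ρ ψ e).mkQ (Pi.single u z) := by
  obtain ⟨q₀, h₀⟩ := exists_inComp_of_mem_vertexFinset hu
  rw [Finset.sum_eq_single q₀ (fun q _ hq => by
      rw [compCoeff_of_not_inComp ρ fun h => hq (h.unique h₀)]; simp) (by simp),
    compCoeff_of_inComp ρ h₀]
  exact (G.mkQ_single_eq_of_inComp ρ ψ h₀ z).symm

end Quotient

section TestMap

variable [Fintype E] [Fintype V]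

noncomputable def compSum (q : Quot (edgeCompRel G Finset.univ)) :
    (V → Fin d → 𝔽) →ₗ[𝔽] (Fin d → 𝔽) :=
  ∑ u, G.compCoeff ρ ψ q u ∘ₗ LinearMap.proj u

lemma compSum_apply (q : Quot (edgeCompRel G Finset.univ)) (x : V → Fin d → 𝔽) :
    G.compSum ρ ψ q x = ∑ u, G.compCoeff ρ ψ q u (x u) := by
  simp [compSum]

variable [DecidableEq V]

lemma compSum_single (q : Quot (edgeCompRel G Finset.univ)) (u : V) (z : Fin d → 𝔽) :
    G.compSum ρ ψ q (Pi.single u z) = G.compCoeff ρ ψ q u z := by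
  rw [compSum_apply, Finset.sum_eq_single u (fun v _ hv => by simp [Pi.single_eq_of_ne hv])
    (by simp), Pi.single_eq_same]

lemma compSum_eq_zero_of_forall_mem_vertexFinset (q : Quot (edgeCompRel G Finset.univ))
    {x : V → Fin d → 𝔽} (hx : ∀ u ∈ vertexFinset G Finset.univ, x u = 0) :
    G.compSum ρ ψ q x = 0 := by
  refine (G.compSum_apply ρ ψ q x).trans (Finset.sum_eq_zero fun u _ => ?_)
  by_cases h : G.InComp q u
  · rw [hx u h.mem_vertexFinset, map_zero]
  · rw [compCoeff_of_not_inComp ρ h, LinearMap.zero_apply]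

lemma compSum_edgeMap_mem_compSpan (q : Quot (edgeCompRel G Finset.univ)) (e : E)
    (y : Fin d → 𝔽) : G.compSum ρ ψ q (G.edgeMap ρ ψ e y) ∈ G.compSpan ρ ψ q := by
  rw [edgeMap_apply, map_sub, compSum_single, compSum_single]
  by_cases h : G.InComp q (G.src e)
  · rw [compCoeff_of_inComp ρ h, compCoeff_of_inComp ρ (inComp_tgt_iff.2 h)]
    refine le_iSup₂ (f := fun γ _ => LinearMap.range (LinearMap.id - (ρ γ).toLinearMap))
      _ (pathGain_mul_mul_inv_mem_compGroup h) ⟨ρ (G.pathGain ψ q (G.tgt e)) y, ?_⟩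
    simp only [LinearMap.sub_apply, LinearMap.id_apply, LinearEquiv.coe_coe,
      ← LinearEquiv.mul_apply, ← map_mul, inv_mul_cancel_right]
  · rw [compCoeff_of_not_inComp ρ h, compCoeff_of_not_inComp ρ (mt inComp_tgt_iff.1 h)]
    simp

noncomputable def testMap : (V → Fin d → 𝔽) →ₗ[𝔽]
    ({u : V // u ∉ vertexFinset G Finset.univ} → Fin d → 𝔽) ×
      ((q : Quot (edgeCompRel G Finset.univ)) → (Fin d → 𝔽) ⧸ G.compSpan ρ ψ q) :=
  (LinearMap.pi fun u => LinearMap.proj u.1).prod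
    (LinearMap.pi fun q => (G.compSpan ρ ψ q).mkQ ∘ₗ G.compSum ρ ψ q)

lemma testMap_apply (x : V → Fin d → 𝔽) :
    G.testMap ρ ψ x = (fun u => x u.1, fun q => Submodule.Quotient.mk (G.compSum ρ ψ q x)) :=
  rfl

lemma iSup_Asub_le_ker_testMap : ⨆ e, Asub G ρ ψ e ≤ LinearMap.ker (G.testMap ρ ψ) := by
  refine iSup_le fun e => ?_
  rw [Asub_eq_range_edgeMap]
  rintro _ ⟨y, rfl⟩
  rw [LinearMap.mem_ker, testMap_apply, Prod.mk_eq_zero]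
  refine ⟨funext fun u => ?_, funext fun q => ?_⟩
  · have hs : u.1 ≠ G.src e := fun h => u.2 (h ▸ by simp [vertexFinset])
    have ht : u.1 ≠ G.tgt e := fun h => u.2 (h ▸ by simp [vertexFinset])
    simp [edgeMap_apply, Pi.single_eq_of_ne hs, Pi.single_eq_of_ne ht]
  · exact (Submodule.Quotient.mk_eq_zero _).2 (G.compSum_edgeMap_mem_compSpan ρ ψ q e y)

lemma mkQ_eq_sum_mkQ_single_compSum {x : V → Fin d → 𝔽}
    (hx : ∀ u ∉ vertexFinset G Finset.univ, x u = 0) :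
    (⨆ e, Asub G ρ ψ e).mkQ x =
      ∑ q, (⨆ e, Asub G ρ ψ e).mkQ (Pi.single (G.compBase q) (G.compSum ρ ψ q x)) := by
  set S := ⨆ e, Asub G ρ ψ e
  have hpull (q : Quot (edgeCompRel G Finset.univ)) :
      S.mkQ (Pi.single (G.compBase q) (G.compSum ρ ψ q x)) =
        ∑ u, S.mkQ (Pi.single (G.compBase q) (G.compCoeff ρ ψ q u (x u))) := by
    rw [compSum_apply]
    exact map_sum (S.mkQ ∘ₗ LinearMap.single 𝔽 (fun _ : V => Fin d → 𝔽) (G.compBase q)) _ _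
  rw [Finset.sum_congr rfl fun q _ => hpull q, Finset.sum_comm]
  conv_lhs => rw [← Finset.univ_sum_single x, map_sum]
  refine Finset.sum_congr rfl fun u _ => ?_
  by_cases hu : u ∈ vertexFinset G Finset.univ
  · exact (G.sum_mkQ_single_compCoeff ρ ψ hu (x u)).symm
  · simp [hx u hu]

lemma ker_testMap_le_iSup_Asub : LinearMap.ker (G.testMap ρ ψ) ≤ ⨆ e, Asub G ρ ψ e := by
  intro x hx
  rw [LinearMap.mem_ker, testMap_apply, Prod.mk_eq_zero, funext_iff, funext_iff] at hx
  rw [← Submodule.Quotient.mk_eq_zero, ← Submodule.mkQ_apply,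
    G.mkQ_eq_sum_mkQ_single_compSum ρ ψ fun u hu => hx.1 ⟨u, hu⟩]
  exact Finset.sum_eq_zero fun q _ =>
    G.mkQ_single_compBase_eq_zero ρ ψ ((Submodule.Quotient.mk_eq_zero _).1 (hx.2 q))

lemma testMap_surjective : Function.Surjective (G.testMap ρ ψ) := by
  rintro ⟨a, b⟩
  choose y hy using fun q => Submodule.mkQ_surjective (G.compSpan ρ ψ q) (b q)
  let x₁ : V → Fin d → 𝔽 := fun u => if h : u ∈ vertexFinset G Finset.univ then 0 else a ⟨u, h⟩
  let x₂ : V → Fin d → 𝔽 :=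
    ∑ q, Pi.single (G.compBase q) ((ρ (G.pathGain ψ q (G.compBase q))).symm (y q))
  have hx₂ (u : V) (hu : u ∉ vertexFinset G Finset.univ) : x₂ u = 0 := by
    refine (Finset.sum_apply u _ _).trans (Finset.sum_eq_zero fun q _ => ?_)
    exact Pi.single_eq_of_ne (by rintro rfl; exact hu (inComp_compBase q).mem_vertexFinset) _
  have hcomp (q : Quot (edgeCompRel G Finset.univ)) : G.compSum ρ ψ q (x₁ + x₂) = y q := by
    rw [map_add, G.compSum_eq_zero_of_forall_mem_vertexFinset ρ ψ q
      fun u hu => by simp [x₁, hu], zero_add, map_sum, Finset.sum_eq_single q]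
    · rw [compSum_single, compCoeff_of_inComp ρ (inComp_compBase q)]
      simp
    · intro q' _ hq'
      rw [compSum_single, compCoeff_of_not_inComp ρ (mt inComp_compBase_iff.1 hq')]
      rfl
    · simp
  refine ⟨x₁ + x₂, ?_⟩
  rw [testMap_apply, Prod.mk.injEq]
  refine ⟨funext fun u => ?_, funext fun q => ?_⟩
  · simp [x₁, hx₂ u u.2, u.2]
  · rw [hcomp, ← hy q]
    rfl

end TestMap

end GG

/-- Theorem 5.3 (with `F = E`): the span of the canonical subspaces `A_{e,ψ}` has
dimension `d|V(E)| − d·c(E) + Σ_{X ∈ C(E)} d_ρ(⟨X⟩)`, where the sum runs over the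
connected components of the edge set, each evaluated at a base vertex. -/
theorem dim_Asub_eq (G : GG V E)
    (ρ : Γ →* ((Fin d → 𝔽) ≃ₗ[𝔽] (Fin d → 𝔽))) (ψ : E → Γ) :
    (Module.finrank 𝔽 ↥(⨆ e : E, Asub G ρ ψ e) : ℤ) =
      d * (vertexFinset G Finset.univ).card - d * edgeNumComp G Finset.univ +
        ∑ᶠ q : Quot (edgeCompRel G (Finset.univ : Finset E)),
          (dRho ρ ↑(G.walkGroup ψ (edgeCompCl G Finset.univ q.out.1) (G.src q.out.1)) : ℤ) := by
  have hker : LinearMap.ker (G.testMap ρ ψ) = ⨆ e, Asub G ρ ψ e :=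
    le_antisymm (G.ker_testMap_le_iSup_Asub ρ ψ) (G.iSup_Asub_le_ker_testMap ρ ψ)
  have hrank := LinearMap.finrank_range_add_finrank_ker (G.testMap ρ ψ)
  rw [LinearMap.range_eq_top.2 (G.testMap_surjective ρ ψ), finrank_top, hker] at hrank
  simp only [Module.finrank_prod, Module.finrank_pi_fintype, Module.finrank_self,
    Finset.sum_const, Finset.card_univ, smul_eq_mul, mul_one, Fintype.card_fin,
    Fintype.card_subtype_compl, Fintype.card_coe] at hrank
  have hquot : ∑ q, Module.finrank 𝔽 ((Fin d → 𝔽) ⧸ G.compSpan ρ ψ q) +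
      ∑ q, Module.finrank 𝔽 (G.compSpan ρ ψ q) =
        Fintype.card (Quot (edgeCompRel G Finset.univ)) * d := by
    simp [← Finset.sum_add_distrib, Submodule.finrank_quotient_add_finrank]
  rw [finsum_eq_sum_of_fintype, edgeNumComp, Nat.card_eq_fintype_card]
  change _ = _ - _ + ∑ q, (Module.finrank 𝔽 (G.compSpan ρ ψ q) : ℤ)
  zify [Finset.card_le_univ (vertexFinset G Finset.univ)] at hrank hquot
  linarith
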